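/- arXiv:2205.15317 — 8 statements merged into one kernel-verified Lean document; each statement's English description precedes it below -/
import Mathlib

section
/- Let ω ~ N(0, I_d) be a standard Gaussian vector in ℝ^d, and let A ∈ ℝ with 1 - 4A > 0. Set B = √(1-4A), C = -1, D = (1-4A)^{d/4}. Then for all x, y ∈ ℝ^d, E[ D exp(A‖ω‖² + B ω·x + C‖x‖²) · D exp(A‖ω‖² + B ω·y + C‖y‖²) ] = exp(-‖x-y‖²/2). -/
open MeasureTheory Real ProbabilityTheory

lemma aux_gauss (b c : ℝ) (hb : 0 < b) :
    ∫ t : ℝ, Real.exp (-b * t ^ 2 + c * t) = Real.sqrt (π / b) * Real.exp (c ^ 2 / (4 * b)) := by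
  have h : ∀ t : ℝ, -b * t ^ 2 + c * t = -b * (t - c / (2 * b)) ^ 2 + c ^ 2 / (4 * b) := by
    intro t; field_simp; ring
  simp_rw [h, Real.exp_add, integral_mul_const]
  rw [show (fun t : ℝ => Real.exp (-b * (t - c / (2*b)) ^ 2))
      = fun t : ℝ => (fun s : ℝ => Real.exp (-b * s ^ 2)) (t - c / (2*b)) from rfl,
    integral_sub_right_eq_self (fun s : ℝ => Real.exp (-b * s ^ 2)) (c / (2*b)),
    integral_gaussian, mul_comm]

lemma gauss_coord (A : ℝ) (hA : 0 < 1 - 4 * A) (c : ℝ) :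
    ∫ t : ℝ, Real.exp (2 * A * t ^ 2 + c * t) ∂(gaussianReal 0 1)
      = (Real.sqrt (1 - 4 * A))⁻¹ * Real.exp (c ^ 2 / (2 * (1 - 4 * A))) := by
  rw [gaussianReal_of_var_ne_zero _ one_ne_zero]
  rw [show gaussianPDF 0 1 = fun t => ((Real.toNNReal (gaussianPDFReal 0 1 t)) : ENNReal) from rfl]
  rw [integral_withDensity_eq_integral_smul
      ((measurable_gaussianPDFReal 0 1).real_toNNReal)]
  have hpdf : ∀ t : ℝ, (Real.toNNReal (gaussianPDFReal 0 1 t)) • Real.exp (2 * A * t ^ 2 + c * t)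
      = (Real.sqrt (2 * π))⁻¹ * Real.exp (-((1 - 4 * A)/2) * t ^ 2 + c * t) := by
    intro t
    rw [NNReal.smul_def, smul_eq_mul, Real.coe_toNNReal _ (gaussianPDFReal_nonneg 0 1 t),
      gaussianPDFReal]
    push_cast
    rw [mul_one, mul_assoc, ← Real.exp_add]
    ring_nf
  simp_rw [hpdf]
  rw [integral_const_mul, aux_gauss _ c (by linarith)]
  rw [show π / ((1 - 4 * A)/2) = (2 * π) / (1 - 4 * A) by rw [div_div_eq_mul_div, mul_comm],
    Real.sqrt_div (by positivity) (1 - 4 * A), ← mul_assoc]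
  have h2π : Real.sqrt (2 * π) ≠ 0 := by positivity
  congr 1
  · field_simp
  · ring_nf

lemma pi_int (d : ℕ) (f : Fin d → ℝ → ℝ) :
    ∫ ω : Fin d → ℝ, ∏ l, f l (ω l) ∂(Measure.pi fun _ : Fin d => gaussianReal 0 1)
      = ∏ l, ∫ t, f l t ∂(gaussianReal 0 1) := by
  letI : MeasureSpace ℝ := ⟨gaussianReal 0 1⟩
  haveI : SigmaFinite (volume : Measure ℝ) := by
    change SigmaFinite (gaussianReal 0 1); infer_instance
  exact MeasureTheory.integral_fintype_prod_eq_prod f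

/-- Unbiasedness of generalized exponential random features
(real parameters, `s = +1`) for the Gaussian kernel. -/
theorem stmt1 (d : ℕ) (A : ℝ) (hA : 0 < 1 - 4 * A) (B C D : ℝ)
    (hB : B = Real.sqrt (1 - 4 * A)) (hC : C = -1)
    (hD : D = (1 - 4 * A) ^ ((d : ℝ) / 4)) (x y : Fin d → ℝ) :
    ∫ ω : Fin d → ℝ,
        (D * Real.exp (A * ∑ l, (ω l) ^ 2 + B * ∑ l, ω l * x l + C * ∑ l, (x l) ^ 2)) *
        (D * Real.exp (A * ∑ l, (ω l) ^ 2 + B * ∑ l, ω l * y l + C * ∑ l, (y l) ^ 2))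
        ∂(Measure.pi fun _ : Fin d => gaussianReal 0 1)
      = Real.exp (-(∑ l, (x l - y l) ^ 2) / 2) := by
  have key : ∀ ω : Fin d → ℝ,
      (D * Real.exp (A * ∑ l, (ω l) ^ 2 + B * ∑ l, ω l * x l + C * ∑ l, (x l) ^ 2)) *
      (D * Real.exp (A * ∑ l, (ω l) ^ 2 + B * ∑ l, ω l * y l + C * ∑ l, (y l) ^ 2))
      = D ^ 2 * ∏ l, Real.exp (2 * A * (ω l) ^ 2 + (B * (x l + y l)) * (ω l)
          + C * ((x l) ^ 2 + (y l) ^ 2)) := by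
    intro ω
    rw [← Real.exp_sum, show ∀ a b c e : ℝ, (a * b) * (c * e) = (a * c) * (b * e) from
      fun a b c e => by ring, ← Real.exp_add, sq]
    congr 1
    simp only [Finset.mul_sum, ← Finset.sum_add_distrib]
    exact congrArg Real.exp (Finset.sum_congr rfl fun l _ => by ring)
  simp_rw [key]
  rw [integral_const_mul,
    pi_int d (fun l t => Real.exp (2 * A * t ^ 2 + (B * (x l + y l)) * t
      + C * ((x l) ^ 2 + (y l) ^ 2)))]
  have hcoord : ∀ l : Fin d,
      ∫ t, Real.exp (2 * A * t ^ 2 + (B * (x l + y l)) * t + C * ((x l) ^ 2 + (y l) ^ 2))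
          ∂(gaussianReal 0 1)
        = (Real.sqrt (1 - 4 * A))⁻¹ * Real.exp (-((x l - y l) ^ 2) / 2) := by
    intro l
    simp_rw [show ∀ t : ℝ,
        Real.exp (2 * A * t ^ 2 + (B * (x l + y l)) * t + C * ((x l) ^ 2 + (y l) ^ 2))
        = Real.exp (2 * A * t ^ 2 + (B * (x l + y l)) * t)
          * Real.exp (C * ((x l) ^ 2 + (y l) ^ 2)) from fun t => Real.exp_add _ _,
      integral_mul_const, gauss_coord A hA (B * (x l + y l)), mul_assoc, ← Real.exp_add]
    congr 2
    have hB2 : B ^ 2 = 1 - 4 * A := by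
      rw [hB, Real.sq_sqrt hA.le]
    rw [hC]
    field_simp [mul_pow, hB2]
    rw [hB2]; ring
  simp_rw [hcoord]
  rw [Finset.prod_mul_distrib, Finset.prod_const, ← Real.exp_sum, Finset.card_fin]
  have hD2 : D ^ 2 * ((Real.sqrt (1 - 4 * A))⁻¹ ^ d) = 1 := by
    rw [hD, ← Real.rpow_natCast (_ ^ ((d:ℝ)/4)) 2, ← Real.rpow_mul hA.le,
      Real.sqrt_eq_rpow, ← Real.rpow_neg_one ((1 - 4*A) ^ ((1:ℝ)/2)),
      ← Real.rpow_mul hA.le, ← Real.rpow_natCast (_ ^ ((1:ℝ)/2 * -1)) d,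
      ← Real.rpow_mul hA.le, ← Real.rpow_add hA,
      show (d:ℝ)/4*((2:ℕ):ℝ) + 1/2*-1*((d:ℕ):ℝ) = 0 by push_cast; ring, Real.rpow_zero]
  rw [← mul_assoc, hD2, one_mul]
  congr 1
  rw [← Finset.sum_div, ← Finset.sum_neg_distrib]
end

section
/- Let ω ~ N(0, I_d), A ∈ ℝ with 1 - 8A > 0, B = √(1-4A), C = -1, D = (1-4A)^{d/4}, and for z ∈ ℝ^d define f(z) = D exp(A‖ω‖² + B ω·z + C‖z‖²). Then Var(f(x) f(y)) = ((1-4A)/√(1-8A))^d · exp( (2(1-4A)/(1-8A)) ‖x+y‖² - 2(‖x‖² + ‖y‖²) ) - exp(-‖x-y‖²). -/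
open MeasureTheory Real ProbabilityTheory
open scoped ENNReal NNReal

lemma int_quad (p q : ℝ) (hp : 0 < p) :
    ∫ x : ℝ, Real.exp (-p * x ^ 2 + q * x) = Real.sqrt (π / p) * Real.exp (q ^ 2 / (4 * p)) := by
  have h : ∀ x : ℝ, Real.exp (-p * x ^ 2 + q * x)
      = Real.exp (-p * (x - q / (2 * p)) ^ 2) * Real.exp (q ^ 2 / (4 * p)) := by
    intro x
    rw [← Real.exp_add]; congr 1; field_simp; ring
  simp_rw [h, integral_mul_const]
  rw [integral_sub_right_eq_self (fun t : ℝ => Real.exp (-p * t ^ 2)) (q / (2 * p)),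
    integral_gaussian]

lemma gauss_mgf (a b : ℝ) (ha : 2 * a < 1) :
    ∫ x, Real.exp (a * x ^ 2 + b * x) ∂(gaussianReal 0 1)
      = (Real.sqrt (1 - 2 * a))⁻¹ * Real.exp (b ^ 2 / (2 * (1 - 2 * a))) := by
  have h1 : gaussianReal 0 1 = volume.withDensity (fun x => ((gaussianPDFReal 0 1 x).toNNReal : ℝ≥0∞)) := by
    rw [gaussianReal_of_var_ne_zero _ one_ne_zero]
    rfl
  rw [h1, integral_withDensity_eq_integral_smul
      ((measurable_gaussianPDFReal 0 1).real_toNNReal)]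
  have hp : (0:ℝ) < 1/2 - a := by linarith
  have h2 : ∀ x : ℝ, (gaussianPDFReal 0 1 x).toNNReal • Real.exp (a * x ^ 2 + b * x)
      = (Real.sqrt (2 * π))⁻¹ * Real.exp (-(1/2 - a) * x ^ 2 + b * x) := by
    intro x
    rw [NNReal.smul_def, smul_eq_mul, Real.coe_toNNReal _ (gaussianPDFReal_nonneg 0 1 x)]
    simp only [gaussianPDFReal, NNReal.coe_one, mul_one, sub_zero]
    rw [mul_assoc, ← Real.exp_add]
    congr 2
    ring
  simp_rw [h2, integral_const_mul, int_quad _ b hp]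
  have h3 : (1/2 - a) ≠ 0 := ne_of_gt hp
  have h4 : (1:ℝ) - 2*a ≠ 0 := by linarith
  have h5 : (2*π)⁻¹ * (π / (1/2 - a)) = (1 - 2*a)⁻¹ := by field_simp
  rw [← mul_assoc, ← Real.sqrt_inv, ← Real.sqrt_mul (by positivity), h5, Real.sqrt_inv,
    show (4:ℝ)*(1/2-a) = 2*(1-2*a) by ring]

lemma pi_prod_integral {d : ℕ} (ν : Measure ℝ) [SigmaFinite ν] (g : Fin d → ℝ → ℝ) :
    ∫ ω, ∏ l, g l (ω l) ∂(Measure.pi fun _ : Fin d => ν) = ∏ l, ∫ t, g l t ∂ν := by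
  letI : MeasureSpace ℝ := ⟨ν⟩
  exact MeasureTheory.integral_fintype_prod_eq_prod g

lemma moment {d : ℕ} (a : ℝ) (ha : 2 * a < 1) (c : Fin d → ℝ) :
    ∫ ω, Real.exp (a * ∑ l, (ω l) ^ 2 + ∑ l, c l * ω l)
        ∂(Measure.pi fun _ : Fin d => gaussianReal 0 1)
      = ((Real.sqrt (1 - 2 * a))⁻¹) ^ d
          * Real.exp ((∑ l, (c l) ^ 2) / (2 * (1 - 2 * a))) := by
  have h1 : ∀ ω : Fin d → ℝ, Real.exp (a * ∑ l, (ω l) ^ 2 + ∑ l, c l * ω l)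
      = ∏ l, Real.exp (a * (ω l) ^ 2 + c l * ω l) := by
    intro ω
    rw [← Real.exp_sum, Finset.sum_add_distrib, Finset.mul_sum]
  simp_rw [h1]
  rw [pi_prod_integral (gaussianReal 0 1) (fun l t => Real.exp (a * t ^ 2 + c l * t))]
  have h2 : ∀ l : Fin d, (∫ t, Real.exp (a * t ^ 2 + c l * t) ∂(gaussianReal 0 1))
      = (Real.sqrt (1 - 2 * a))⁻¹ * Real.exp ((c l) ^ 2 / (2 * (1 - 2 * a))) :=
    fun l => gauss_mgf a (c l) ha
  simp_rw [h2]
  rw [Finset.prod_mul_distrib, Finset.prod_const, ← Real.exp_sum, Finset.card_univ,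
    Fintype.card_fin, ← Finset.sum_div]

/-- Variance of the generalized exponential random feature estimator
(real parameters, `s = +1`) of the Gaussian kernel. -/
theorem stmt2 (d : ℕ) (A : ℝ) (hA : 0 < 1 - 8 * A) (B C D : ℝ)
    (hB : B = Real.sqrt (1 - 4 * A)) (hC : C = -1)
    (hD : D = (1 - 4 * A) ^ ((d : ℝ) / 4)) (x y : Fin d → ℝ) :
    let μ := Measure.pi fun _ : Fin d => gaussianReal 0 1
    let f : (Fin d → ℝ) → (Fin d → ℝ) → ℝ := fun z ω =>
      D * Real.exp (A * ∑ l, (ω l) ^ 2 + B * ∑ l, ω l * z l + C * ∑ l, (z l) ^ 2)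
    (∫ ω, (f x ω * f y ω) ^ 2 ∂μ) - (∫ ω, f x ω * f y ω ∂μ) ^ 2
      = ((1 - 4 * A) / Real.sqrt (1 - 8 * A)) ^ d *
          Real.exp ((2 * (1 - 4 * A) / (1 - 8 * A)) * ∑ l, (x l + y l) ^ 2
            - 2 * (∑ l, (x l) ^ 2 + ∑ l, (y l) ^ 2))
        - Real.exp (-(∑ l, (x l - y l) ^ 2)) := by
  intro μ f
  have hu : (0:ℝ) < 1 - 4 * A := by nlinarith
  have hv : (0:ℝ) < 1 - 8 * A := hA
  have hBsq : B ^ 2 = 1 - 4 * A := by rw [hB]; exact Real.sq_sqrt hu.le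
  -- pointwise identities
  have hf : ∀ ω, f x ω * f y ω
      = (D ^ 2 * Real.exp (C * (∑ l, (x l) ^ 2 + ∑ l, (y l) ^ 2)))
        * Real.exp ((2 * A) * ∑ l, (ω l) ^ 2 + ∑ l, (B * (x l + y l)) * ω l) := by
    intro ω
    simp only [f]
    rw [mul_mul_mul_comm, ← Real.exp_add, ← pow_two, mul_assoc, ← Real.exp_add]
    congr 1
    have hs : ∑ l, (B * (x l + y l)) * ω l
        = B * ∑ l, ω l * x l + B * ∑ l, ω l * y l := by
      rw [Finset.mul_sum, Finset.mul_sum, ← Finset.sum_add_distrib]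
      exact Finset.sum_congr rfl fun l _ => by ring
    rw [hs]; ring
  have hf2 : ∀ ω, (f x ω * f y ω) ^ 2
      = (D ^ 4 * Real.exp ((2 * C) * (∑ l, (x l) ^ 2 + ∑ l, (y l) ^ 2)))
        * Real.exp ((4 * A) * ∑ l, (ω l) ^ 2 + ∑ l, ((2 * B) * (x l + y l)) * ω l) := by
    intro ω
    have e1 : ∀ t : ℝ, Real.exp t ^ 2 = Real.exp (2 * t) := fun t => by
      rw [pow_two, ← Real.exp_add]; ring_nf
    have hs : ∑ l, ((2 * B) * (x l + y l)) * ω l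
        = 2 * ∑ l, (B * (x l + y l)) * ω l := by
      rw [Finset.mul_sum]
      exact Finset.sum_congr rfl fun l _ => by ring
    rw [hf ω, mul_pow, mul_pow, e1, e1, ← pow_mul, hs]
    norm_num
    congr 1
    · congr 1; ring
    · congr 1; ring
  -- the two moments
  have hmom1 : ∫ ω, f x ω * f y ω ∂μ
      = (D ^ 2 * Real.exp (C * (∑ l, (x l) ^ 2 + ∑ l, (y l) ^ 2)))
        * (((Real.sqrt (1 - 2 * (2 * A)))⁻¹) ^ d
            * Real.exp ((∑ l, (B * (x l + y l)) ^ 2) / (2 * (1 - 2 * (2 * A))))) := by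
    simp only [μ]
    simp_rw [hf]
    rw [integral_const_mul, moment (2 * A) (by nlinarith) (fun l => B * (x l + y l))]
  have hmom2 : ∫ ω, (f x ω * f y ω) ^ 2 ∂μ
      = (D ^ 4 * Real.exp ((2 * C) * (∑ l, (x l) ^ 2 + ∑ l, (y l) ^ 2)))
        * (((Real.sqrt (1 - 2 * (4 * A)))⁻¹) ^ d
            * Real.exp ((∑ l, ((2 * B) * (x l + y l)) ^ 2) / (2 * (1 - 2 * (4 * A))))) := by
    simp only [μ]
    simp_rw [hf2]
    rw [integral_const_mul, moment (4 * A) (by nlinarith) (fun l => (2 * B) * (x l + y l))]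
  -- rpow facts
  have hD2 : D ^ 2 = (1 - 4 * A) ^ ((d : ℝ) / 2) := by
    rw [hD, ← Real.rpow_natCast ((1 - 4 * A) ^ ((d : ℝ) / 4)) 2, ← Real.rpow_mul hu.le]
    congr 1
    push_cast; ring
  have hD4 : D ^ 4 = (1 - 4 * A) ^ d := by
    rw [hD, ← Real.rpow_natCast ((1 - 4 * A) ^ ((d : ℝ) / 4)) 4, ← Real.rpow_mul hu.le,
      ← Real.rpow_natCast (1 - 4 * A) d]
    congr 1
    push_cast; ring
  have hinvsq : ((Real.sqrt (1 - 4 * A))⁻¹) ^ d = (1 - 4 * A) ^ (-(d : ℝ) / 2) := by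
    rw [Real.sqrt_eq_rpow, ← Real.rpow_neg hu.le,
      ← Real.rpow_natCast ((1 - 4 * A) ^ (-(1 / 2) : ℝ)) d, ← Real.rpow_mul hu.le]
    congr 1
    push_cast; ring
  -- sum identities
  have hsum1 : ∑ l, (B * (x l + y l)) ^ 2 = (1 - 4 * A) * ∑ l, (x l + y l) ^ 2 := by
    rw [← hBsq, Finset.mul_sum]
    exact Finset.sum_congr rfl fun l _ => by ring
  have hsum2 : ∑ l, ((2 * B) * (x l + y l)) ^ 2 = 4 * ((1 - 4 * A) * ∑ l, (x l + y l) ^ 2) := by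
    rw [← hBsq, Finset.mul_sum, Finset.mul_sum]
    exact Finset.sum_congr rfl fun l _ => by ring
  have hPQ : ∑ l, (x l + y l) ^ 2
      = 2 * ∑ l, (x l) ^ 2 + 2 * ∑ l, (y l) ^ 2 - ∑ l, (x l - y l) ^ 2 := by
    rw [Finset.mul_sum, Finset.mul_sum, ← Finset.sum_add_distrib, ← Finset.sum_sub_distrib]
    exact Finset.sum_congr rfl fun l _ => by ring
  -- closed form of first moment
  have hI1 : ∫ ω, f x ω * f y ω ∂μ
      = Real.exp (-(∑ l, (x l) ^ 2 + ∑ l, (y l) ^ 2) + (∑ l, (x l + y l) ^ 2) / 2) := by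
    rw [hmom1]
    have h42 : (1:ℝ) - 2 * (2 * A) = 1 - 4 * A := by ring
    rw [h42, hD2, hinvsq, hsum1, hC]
    rw [mul_mul_mul_comm, ← Real.rpow_add hu, ← Real.exp_add]
    rw [show (d:ℝ)/2 + -(d:ℝ)/2 = 0 by ring, Real.rpow_zero, one_mul]
    congr 1
    rw [show (1 - 4*A) * (∑ l, (x l + y l) ^ 2) / (2 * (1 - 4 * A))
        = (∑ l, (x l + y l) ^ 2) / 2 by field_simp]
    ring
  -- closed form of second moment
  have hI2 : ∫ ω, (f x ω * f y ω) ^ 2 ∂μ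
      = ((1 - 4 * A) / Real.sqrt (1 - 8 * A)) ^ d *
          Real.exp ((2 * (1 - 4 * A) / (1 - 8 * A)) * ∑ l, (x l + y l) ^ 2
            - 2 * (∑ l, (x l) ^ 2 + ∑ l, (y l) ^ 2)) := by
    rw [hmom2]
    have h84 : (1:ℝ) - 2 * (4 * A) = 1 - 8 * A := by ring
    rw [h84, hD4, hsum2, hC]
    rw [mul_mul_mul_comm, ← mul_pow, ← div_eq_mul_inv, ← Real.exp_add]
    congr 1
    rw [show 4 * ((1 - 4*A) * ∑ l, (x l + y l) ^ 2) / (2 * (1 - 8 * A))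
        = (2 * (1 - 4 * A) / (1 - 8 * A)) * ∑ l, (x l + y l) ^ 2 by field_simp; ring]
    ring
  rw [hI1, hI2]
  congr 1
  rw [pow_two, ← Real.exp_add]
  congr 1
  rw [hPQ]
  ring
end

section
/- Fix d ≥ 1 and x, y ∈ ℝ^d with ‖x+y‖² > 0. Define g(ρ) = d·log(ρ+1) - (d/2)·log ρ + (1+ρ)‖x+y‖² for ρ ∈ (0, ∞). Then g attains its unique global minimum at ρ* = ( √((2‖x+y‖² + d)² + 8d‖x+y‖²) - 2‖x+y‖² - d ) / (4‖x+y‖²). -/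
open Real


lemma oprf_main (D s : ℝ) (hD : 1 ≤ D) (hs : 0 < s)
    (g : ℝ → ℝ)
    (hg : g = fun ρ => D * Real.log (ρ + 1) - (D / 2) * Real.log ρ + (1 + ρ) * s)
    (ρs : ℝ)
    (hρs : ρs = (Real.sqrt ((2 * s + D) ^ 2 + 8 * D * s) - 2 * s - D) / (4 * s)) :
    (∀ ρ ∈ Set.Ioi (0 : ℝ), g ρs ≤ g ρ) ∧
    (∀ ρ ∈ Set.Ioi (0 : ℝ), ρ ≠ ρs → g ρs < g ρ) := by
  have hD0 : (0:ℝ) < D := by linarith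
  set c : ℝ := 2 * s + D with hc
  have hc0 : 0 < c := by positivity
  have hΔ : (0:ℝ) ≤ c ^ 2 + 8 * D * s := by positivity
  set r : ℝ := Real.sqrt (c ^ 2 + 8 * D * s) with hrdef
  have hr2 : r ^ 2 = c ^ 2 + 8 * D * s := Real.sq_sqrt hΔ
  have hr0 : 0 ≤ r := Real.sqrt_nonneg _
  have hrc : c < r := by nlinarith
  have hρs' : ρs = (r - c) / (4 * s) := by rw [hρs, hc]; ring
  have hρspos : 0 < ρs := by
    rw [hρs']; apply div_pos (by linarith) (by linarith)
  -- the critical quadratic vanishes at ρs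
  have hq0 : 2 * s * ρs ^ 2 + c * ρs - D = 0 := by
    rw [hρs']
    field_simp
    nlinarith [hr2]
  -- derivative
  have hder : ∀ ρ : ℝ, 0 < ρ → HasDerivAt g (D / (ρ + 1) - D / 2 / ρ + s) ρ := by
    intro ρ hρ
    rw [hg]
    have h1 : HasDerivAt (fun x : ℝ => x + 1) 1 ρ := (hasDerivAt_id ρ).add_const 1
    have h2 : HasDerivAt (fun x : ℝ => Real.log (x + 1)) (1 / (ρ + 1)) ρ := by
      simpa using h1.log (by linarith)
    have h3 : HasDerivAt (fun x : ℝ => Real.log x) (1 / ρ) ρ := by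
      simpa using (hasDerivAt_id ρ).log (ne_of_gt hρ)
    have h4 : HasDerivAt (fun x : ℝ => (1 + x) * s) s ρ := by
      simpa using ((hasDerivAt_id ρ).const_add 1).mul_const s
    have := ((h2.const_mul D).sub (h3.const_mul (D / 2))).add h4
    refine this.congr_deriv ?_
    ring
  have hderiv : ∀ ρ : ℝ, 0 < ρ → deriv g ρ = D / (ρ + 1) - D / 2 / ρ + s :=
    fun ρ hρ => (hder ρ hρ).deriv
  have hform : ∀ ρ : ℝ, 0 < ρ →
      D / (ρ + 1) - D / 2 / ρ + s = (2 * s * ρ ^ 2 + c * ρ - D) / (2 * ρ * (ρ + 1)) := by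
    intro ρ hρ
    have h1 : ρ + 1 ≠ 0 := by positivity
    field_simp
    ring
  have hcont : ∀ ρ : ℝ, 0 < ρ → ContinuousWithinAt g (Set.Ioi (0:ℝ)) ρ := fun ρ hρ =>
    (hder ρ hρ).continuousAt.continuousWithinAt
  -- strict anti on Ioc 0 ρs
  have hanti : StrictAntiOn g (Set.Ioc 0 ρs) := by
    apply strictAntiOn_of_deriv_neg (convex_Ioc 0 ρs)
    · exact fun ρ hρ => (hder ρ hρ.1).continuousAt.continuousWithinAt
    · intro ρ hρ
      rw [interior_Ioc] at hρ
      obtain ⟨h1, h2⟩ := hρ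
      rw [hderiv ρ h1, hform ρ h1]
      apply div_neg_of_neg_of_pos
      · nlinarith [mul_pos (sub_pos.2 h2) (show (0:ℝ) < 2 * s * (ρ + ρs) + c by positivity)]
      · positivity
  have hmono : StrictMonoOn g (Set.Ici ρs) := by
    apply strictMonoOn_of_deriv_pos (convex_Ici ρs)
    · exact fun ρ hρ => (hder ρ (lt_of_lt_of_le hρspos hρ)).continuousAt.continuousWithinAt
    · intro ρ hρ
      rw [interior_Ici] at hρ
      have h1 : 0 < ρ := lt_trans hρspos hρ
      rw [hderiv ρ h1, hform ρ h1]
      apply div_pos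
      · nlinarith [mul_pos (sub_pos.2 hρ) (show (0:ℝ) < 2 * s * (ρ + ρs) + c by positivity)]
      · positivity
  have key : ∀ ρ ∈ Set.Ioi (0:ℝ), ρ ≠ ρs → g ρs < g ρ := by
    intro ρ hρ hne
    rcases lt_or_gt_of_ne hne with h | h
    · exact hanti ⟨hρ, h.le⟩ ⟨hρspos, le_rfl⟩ h
    · exact hmono (Set.mem_Ici.2 le_rfl) h.le h
  refine ⟨fun ρ hρ => ?_, key⟩
  by_cases hne : ρ = ρs
  · rw [hne]
  · exact (key ρ hρ hne).le


/-- The OPRF objective `g(ρ) = d log(ρ+1) - (d/2) log ρ + (1+ρ)‖x+y‖²`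
attains its unique global minimum on `(0, ∞)` at `ρ*`. -/
theorem stmt3 (d : ℕ) (hd : 1 ≤ d) (n : ℕ) (x y : Fin n → ℝ)
    (hs : 0 < ∑ l, (x l + y l) ^ 2) :
    let s : ℝ := ∑ l, (x l + y l) ^ 2
    let g : ℝ → ℝ := fun ρ => d * Real.log (ρ + 1) - ((d : ℝ) / 2) * Real.log ρ + (1 + ρ) * s
    let ρs : ℝ := (Real.sqrt ((2 * s + d) ^ 2 + 8 * d * s) - 2 * s - d) / (4 * s)
    (∀ ρ ∈ Set.Ioi (0 : ℝ), g ρs ≤ g ρ) ∧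
    (∀ ρ ∈ Set.Ioi (0 : ℝ), ρ ≠ ρs → g ρs < g ρ) := by
  intro s g ρs
  exact oprf_main (d : ℝ) s (by exact_mod_cast hd) hs g rfl ρs rfl
end

section
/- Let ω ~ N(0, I_d) and f_pos(ω, z) = exp(ω·z - ‖z‖²). Then for all x, y ∈ ℝ^d, E[f_pos(ω,x) f_pos(ω,y)] = exp(-‖x-y‖²/2) and Var(f_pos(ω,x) f_pos(ω,y)) = exp(4 x·y) - exp(-‖x-y‖²). -/
open MeasureTheory Real ProbabilityTheory

lemma gauss_mgf_s7 (c : ℝ) : ∫ t, rexp (c * t) ∂(gaussianReal 0 1) = rexp (c ^ 2 / 2) := by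
  rw [gaussianReal_of_var_ne_zero 0 one_ne_zero, gaussianPDF_def]
  rw [show (fun x => ENNReal.ofReal (gaussianPDFReal 0 1 x)) = fun x => ((gaussianPDFReal 0 1 x).toNNReal : ENNReal) from rfl,
    integral_withDensity_eq_integral_smul
    ((measurable_gaussianPDFReal 0 1).real_toNNReal)]
  have h : ∀ t : ℝ, (gaussianPDFReal 0 1 t).toNNReal • rexp (c * t)
      = rexp (c ^ 2 / 2) * gaussianPDFReal c 1 t := by
    intro t
    rw [NNReal.smul_def, Real.coe_toNNReal _ (gaussianPDFReal_nonneg 0 1 t)]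
    simp only [gaussianPDFReal, smul_eq_mul]
    rw [mul_comm (rexp (c ^ 2 / 2))]
    rw [mul_assoc _ (rexp _) (rexp _), ← Real.exp_add, mul_assoc _ (rexp _) (rexp _), ← Real.exp_add]
    congr 1
    push_cast
    ring
  simp_rw [h]
  rw [integral_const_mul, integral_gaussianPDFReal_eq_one c one_ne_zero, mul_one]

lemma gauss_mgf_pi (d : ℕ) (c : Fin d → ℝ) :
    ∫ ω, rexp (∑ l, c l * ω l) ∂(Measure.pi fun _ : Fin d => gaussianReal 0 1)
      = rexp ((∑ l, (c l) ^ 2) / 2) := by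
  letI : MeasureSpace ℝ := ⟨gaussianReal 0 1⟩
  haveI : SigmaFinite (volume : Measure ℝ) :=
    (inferInstance : SigmaFinite (gaussianReal 0 1 : Measure ℝ))
  have h : ∫ x : Fin d → ℝ, ∏ i, rexp (c i * x i) = ∏ i, ∫ t, rexp (c i * t) :=
    MeasureTheory.integral_fintype_prod_eq_prod (𝕜 := ℝ) (ι := Fin d)
    (fun l t => rexp (c l * t))
  simp_rw [Real.exp_sum]
  rw [show (Measure.pi fun _ : Fin d => gaussianReal 0 1) = (volume : Measure (Fin d → ℝ)) from rfl]
  rw [h]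
  simp_rw [show (volume : Measure ℝ) = gaussianReal 0 1 from rfl, gauss_mgf_s7]
  rw [← Real.exp_sum, Finset.sum_div]

/-- Positive random features: mean and variance for the Gaussian kernel. -/
theorem stmt7 (d : ℕ) (x y : Fin d → ℝ) :
    let μ := Measure.pi fun _ : Fin d => gaussianReal 0 1
    let f : (Fin d → ℝ) → (Fin d → ℝ) → ℝ := fun ω z =>
      Real.exp (∑ l, ω l * z l - ∑ l, (z l) ^ 2)
    (∫ ω, f ω x * f ω y ∂μ = Real.exp (-(∑ l, (x l - y l) ^ 2) / 2)) ∧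
    ((∫ ω, (f ω x * f ω y) ^ 2 ∂μ) - (∫ ω, f ω x * f ω y ∂μ) ^ 2
      = Real.exp (4 * ∑ l, x l * y l) - Real.exp (-(∑ l, (x l - y l) ^ 2))) := by
  intro μ f
  have hxy : ∑ l, (x l + y l) ^ 2
      = ∑ l, (x l) ^ 2 + ∑ l, (y l) ^ 2 + 2 * ∑ l, x l * y l := by
    rw [Finset.mul_sum, ← Finset.sum_add_distrib, ← Finset.sum_add_distrib]
    exact Finset.sum_congr rfl fun l _ => by ring
  have hsub : ∑ l, (x l - y l) ^ 2
      = ∑ l, (x l) ^ 2 + ∑ l, (y l) ^ 2 - 2 * ∑ l, x l * y l := by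
    rw [Finset.mul_sum, ← Finset.sum_add_distrib, ← Finset.sum_sub_distrib]
    exact Finset.sum_congr rfl fun l _ => by ring
  have key : ∫ ω, f ω x * f ω y ∂μ = Real.exp (-(∑ l, (x l - y l) ^ 2) / 2) := by
    have h1 : ∀ ω : Fin d → ℝ, f ω x * f ω y
        = rexp (-(∑ l, (x l) ^ 2) - ∑ l, (y l) ^ 2)
          * rexp (∑ l, (x l + y l) * ω l) := by
      intro ω
      simp only [f]
      rw [← Real.exp_add, ← Real.exp_add]
      congr 1
      have h : ∑ l, (x l + y l) * ω l = ∑ l, ω l * x l + ∑ l, ω l * y l := by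
        rw [← Finset.sum_add_distrib]
        exact Finset.sum_congr rfl fun l _ => by ring
      rw [h]; ring
    simp_rw [h1]
    rw [integral_const_mul, gauss_mgf_pi, ← Real.exp_add]
    congr 1
    rw [hxy, hsub]; ring
  have key2 : ∫ ω, (f ω x * f ω y) ^ 2 ∂μ = Real.exp (4 * ∑ l, x l * y l) := by
    have h2 : ∀ ω : Fin d → ℝ, (f ω x * f ω y) ^ 2
        = rexp (-(2 * ∑ l, (x l) ^ 2) - 2 * ∑ l, (y l) ^ 2)
          * rexp (∑ l, (2 * (x l + y l)) * ω l) := by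
      intro ω
      simp only [f]
      rw [sq, ← Real.exp_add, ← Real.exp_add, ← Real.exp_add]
      congr 1
      have h : ∑ l, (2 * (x l + y l)) * ω l
          = 2 * ∑ l, ω l * x l + 2 * ∑ l, ω l * y l := by
        rw [Finset.mul_sum, Finset.mul_sum, ← Finset.sum_add_distrib]
        exact Finset.sum_congr rfl fun l _ => by ring
      rw [h]; ring
    simp_rw [h2]
    rw [integral_const_mul, gauss_mgf_pi, ← Real.exp_add]
    congr 1
    have h4 : ∑ l, (2 * (x l + y l)) ^ 2 = 4 * ∑ l, (x l + y l) ^ 2 := by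
      rw [Finset.mul_sum]
      exact Finset.sum_congr rfl fun l _ => by ring
    rw [h4, hxy]; ring
  refine ⟨key, ?_⟩
  rw [key, key2, sq, ← Real.exp_add]
  congr 2
  ring
end

section
/- Let ω ~ N(0, I_d) and f_trig(ω, x) = exp(i ω·x), f_trig'(ω, y) = exp(-i ω·y). Then E[Re(f_trig(ω,x) f_trig'(ω,y))] = exp(-‖x-y‖²/2) and Var(Re(f_trig(ω,x) f_trig'(ω,y))) = (1/2)(1 - exp(-‖x-y‖²/2)²)². -/
open MeasureTheory Real ProbabilityTheory Complex

lemma char1 (c : ℝ) :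
    ∫ x : ℝ, Complex.exp (Complex.I * (c * x : ℝ)) ∂(gaussianReal 0 1)
      = (Real.exp (-c ^ 2 / 2) : ℂ) := by
  rw [gaussianReal_of_var_ne_zero 0 one_ne_zero]
  have hmeas : Measurable fun x : ℝ => (gaussianPDFReal 0 1 x).toNNReal :=
    (measurable_gaussianPDFReal 0 1).real_toNNReal
  have hd : gaussianPDF 0 1 = fun x => ((gaussianPDFReal 0 1 x).toNNReal : ENNReal) := rfl
  rw [hd, integral_withDensity_eq_integral_smul hmeas]
  simp only [NNReal.smul_def, Real.coe_toNNReal _ (gaussianPDFReal_nonneg 0 1 _)]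
  have key : ∀ x : ℝ, (gaussianPDFReal 0 1 x) • Complex.exp (Complex.I * (c * x : ℝ)) =
      ((√(2*π))⁻¹ : ℂ) * Complex.exp ((-(1/2) : ℂ) * x^2 + (Complex.I * c) * x + 0) := by
    intro x
    rw [Complex.real_smul, gaussianPDFReal_def]
    push_cast
    rw [mul_assoc, ← Complex.exp_add]
    congr 1
    · norm_num
    · exact congrArg Complex.exp (by ring)
  simp_rw [key]
  rw [MeasureTheory.integral_const_mul,
    integral_cexp_quadratic (by norm_num : (-(1/2):ℂ).re < 0) (Complex.I * c) 0]
  have h2 : (0:ℂ) - (Complex.I * c)^2 / (4 * (-(1/2))) = ((-c^2/2 : ℝ) : ℂ) := by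
    push_cast
    rw [mul_pow, Complex.I_sq]
    ring
  have hπ : (0:ℝ) < 2 * π := by positivity
  have h1 : ((π:ℂ) / -(-(1/2))) ^ (1/2 : ℂ) = (√(2*π) : ℂ) := by
    have : ((π:ℂ) / -(-(1/2))) = ((2*π : ℝ) : ℂ) := by push_cast; ring
    rw [this, show (1/2 : ℂ) = ((1/2 : ℝ) : ℂ) by norm_num,
      ← Complex.ofReal_cpow hπ.le]
    norm_num [Real.sqrt_eq_rpow]
  rw [h1, h2]
  rw [← mul_assoc, inv_mul_cancel₀ (Complex.ofReal_ne_zero.mpr (by positivity)), one_mul, Complex.ofReal_exp]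

lemma contf (d : ℕ) (t : Fin d → ℝ) :
    Continuous fun ω : Fin d → ℝ =>
      Complex.exp (Complex.I * ((∑ l, t l * ω l : ℝ) : ℂ)) := by
  apply Complex.continuous_exp.comp
  apply continuous_const.mul
  exact Complex.continuous_ofReal.comp (by continuity)

lemma intPi (d : ℕ) (t : Fin d → ℝ) :
    Integrable (fun ω : Fin d → ℝ => Complex.exp (Complex.I * ((∑ l, t l * ω l : ℝ) : ℂ)))
      (Measure.pi fun _ : Fin d => gaussianReal 0 1) := by
  apply Integrable.mono' (integrable_const 1) (contf d t).aestronglyMeasurable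
  filter_upwards with ω
  rw [Complex.norm_exp]
  simp

lemma charPi (d : ℕ) (t : Fin d → ℝ) :
    ∫ ω, Complex.exp (Complex.I * ((∑ l, t l * ω l : ℝ) : ℂ))
        ∂(Measure.pi fun _ : Fin d => gaussianReal 0 1)
      = (Real.exp (-(∑ l, t l ^ 2) / 2) : ℂ) := by
  letI : MeasureSpace ℝ := ⟨gaussianReal 0 1⟩
  haveI : SigmaFinite (volume : Measure ℝ) := inferInstanceAs (SigmaFinite (gaussianReal 0 1))
  have hsplit : ∀ ω : Fin d → ℝ, Complex.exp (Complex.I * ((∑ l, t l * ω l : ℝ) : ℂ))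
      = ∏ l, Complex.exp (Complex.I * ((t l * ω l : ℝ) : ℂ)) := by
    intro ω
    rw [← Complex.exp_sum]
    congr 1
    push_cast
    rw [Finset.mul_sum]
  simp_rw [hsplit]
  have := MeasureTheory.integral_fintype_prod_eq_prod (ι := Fin d) (E := fun _ => ℝ) (μ := fun _ => volume)
    (fun l (z : ℝ) => Complex.exp (Complex.I * ((t l * z : ℝ) : ℂ)))
  rw [show (Measure.pi fun _ : Fin d => gaussianReal 0 1) = (volume : Measure (Fin d → ℝ)) from rfl]
  rw [volume_pi, this]
  have h1 : ∀ l, (∫ z : ℝ, Complex.exp (Complex.I * ((t l * z : ℝ) : ℂ)))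
      = (Real.exp (-(t l) ^ 2 / 2) : ℂ) := fun l => char1 (t l)
  simp_rw [h1, ← Complex.ofReal_prod, ← Real.exp_sum]
  congr 2
  rw [← Finset.sum_div, ← Finset.sum_neg_distrib]

/-- Trigonometric (random kitchen sink) features: mean and variance
for the Gaussian kernel. -/
theorem stmt8 (d : ℕ) (x y : Fin d → ℝ) :
    let μ := Measure.pi fun _ : Fin d => gaussianReal 0 1
    let Z : (Fin d → ℝ) → ℝ := fun ω =>
      (Complex.exp (Complex.I * ((∑ l, ω l * x l : ℝ) : ℂ)) *
        Complex.exp (-Complex.I * ((∑ l, ω l * y l : ℝ) : ℂ))).re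
    (∫ ω, Z ω ∂μ = Real.exp (-(∑ l, (x l - y l) ^ 2) / 2)) ∧
    ((∫ ω, (Z ω) ^ 2 ∂μ) - (∫ ω, Z ω ∂μ) ^ 2
      = (1 / 2) * (1 - (Real.exp (-(∑ l, (x l - y l) ^ 2) / 2)) ^ 2) ^ 2) := by
  intro μ Z
  have hμprob : IsProbabilityMeasure μ := by infer_instance
  set t : Fin d → ℝ := fun l => x l - y l with ht
  have hre : ∀ r : ℝ, (Complex.exp (Complex.I * (r : ℂ))).re = Real.cos r := by
    intro r; rw [mul_comm]; exact Complex.exp_ofReal_mul_I_re r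
  have hZ : ∀ ω, Z ω = Real.cos (∑ l, t l * ω l) := by
    intro ω
    show (Complex.exp _ * Complex.exp _).re = _
    rw [← Complex.exp_add]
    have : Complex.I * ((∑ l, ω l * x l : ℝ) : ℂ) + -Complex.I * ((∑ l, ω l * y l : ℝ) : ℂ)
        = Complex.I * ((∑ l, t l * ω l : ℝ) : ℂ) := by
      have hs : (∑ l, t l * ω l) = (∑ l, ω l * x l) - (∑ l, ω l * y l) := by
        rw [← Finset.sum_sub_distrib]
        exact Finset.sum_congr rfl fun l _ => by simp only [ht]; ring
      rw [hs]; push_cast; ring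
    rw [this, hre]
  have hcos : ∀ s : Fin d → ℝ,
      ∫ ω, Real.cos (∑ l, s l * ω l) ∂μ = Real.exp (-(∑ l, s l ^ 2) / 2) := by
    intro s
    have : ∀ ω : Fin d → ℝ, Real.cos (∑ l, s l * ω l)
        = (Complex.exp (Complex.I * ((∑ l, s l * ω l : ℝ) : ℂ))).re := fun ω => (hre _).symm
    simp_rw [this]
    have h := integral_re (μ := μ) (intPi d s)
    simp only [RCLike.re_to_complex] at h
    rw [h, charPi d s, Complex.ofReal_re]
  have hmean : ∫ ω, Z ω ∂μ = Real.exp (-(∑ l, t l ^ 2) / 2) := by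
    simp_rw [hZ]; exact hcos t
  have hsq : ∫ ω, (Z ω) ^ 2 ∂μ
      = 1 / 2 + (1 / 2) * Real.exp (-(∑ l, (2 * t l) ^ 2) / 2) := by
    have h2s : ∀ ω : Fin d → ℝ, (Z ω) ^ 2
        = 1 / 2 + (1 / 2) * Real.cos (∑ l, (2 * t l) * ω l) := by
      intro ω
      rw [hZ, Real.cos_sq]
      have : 2 * ∑ l, t l * ω l = ∑ l, (2 * t l) * ω l := by
        rw [Finset.mul_sum]; exact Finset.sum_congr rfl fun l _ => by ring
      rw [this]; ring
    simp_rw [h2s]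
    have hint : Integrable (fun ω => Real.cos (∑ l, (2 * t l) * ω l)) μ := by
      apply Integrable.mono' (integrable_const 1)
      · exact (Real.continuous_cos.comp (by continuity)).aestronglyMeasurable
      · filter_upwards with ω
        exact abs_le.mpr ⟨Real.neg_one_le_cos _, Real.cos_le_one _⟩
    rw [integral_add (integrable_const _) (hint.const_mul _), integral_const,
      integral_const_mul, hcos (fun l => 2 * t l)]
    simp
  refine ⟨hmean, ?_⟩
  rw [hsq, hmean]
  have h4 : (∑ l, (2 * t l) ^ 2) = 4 * ∑ l, t l ^ 2 := by
    rw [Finset.mul_sum]; exact Finset.sum_congr rfl fun l _ => by ring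
  rw [h4, show -(4 * ∑ l, t l ^ 2) / 2 = (4 : ℕ) * (-(∑ l, t l ^ 2) / 2) by push_cast; ring,
    Real.exp_nat_mul]
  ring
end

section
/- Let ω = (ω_1,…,ω_d) where ω_l are i.i.d. with ℙ(ω_l = k) = p_k > 0 for k ∈ ℕ∪{0}, Σ_k p_k = 1, and suppose Σ_k (x_l y_l)^k / (k! p_k) < ∞ converges absolutely for each l. Define f(ω, z) = exp(-‖z‖²/2) Π_{l=1}^d z_l^{ω_l} (ω_l!)^{-1/2} p_{ω_l}^{-1/2}. Then E[f(ω,x) f(ω,y)] = exp(-‖x-y‖²/2). -/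
/-!
Each factor `p_k` of the pmf cancels against the two weights `p_k^{-1/2}`, so the expectation is
`exp(-(‖x‖² + ‖y‖²)/2)` times `∑_ω ∏_l (x_l y_l)^{ω_l} / ω_l!`. By absolute convergence this sum over
`ℕ^d` factors as `∏_l ∑_k (x_l y_l)^k / k! = ∏_l exp(x_l y_l) = exp ⟨x, y⟩`, and
`-(‖x‖² + ‖y‖²)/2 + ⟨x, y⟩ = -‖x - y‖²/2`.
-/

open Real

section PiProd

variable {ι R : Type*} [NormedCommRing R]

lemma Fin.prod_univ_apply_cons {n : ℕ} (g : Fin (n + 1) → ι → R) (k : ι) (ω : Fin n → ι) :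
    ∏ l, g l ((Fin.cons k ω : Fin (n + 1) → ι) l) = g 0 k * ∏ l : Fin n, g l.succ (ω l) := by
  simp [Fin.prod_univ_succ]

lemma summable_norm_pi_prod {d : ℕ} (g : Fin d → ι → R) (hg : ∀ l, Summable fun k => ‖g l k‖) :
    Summable fun ω : Fin d → ι => ‖∏ l, g l (ω l)‖ := by
  induction d with
  | zero => exact .of_finite
  | succ n ih =>
    rw [← (Fin.consEquiv fun _ => ι).summable_iff]
    refine ((hg 0).mul_norm (ih (fun l => g l.succ) fun l => hg l.succ)).congr fun q => ?_
    simp only [Function.comp_apply, Fin.consEquiv_apply, Fin.prod_univ_apply_cons]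

variable [CompleteSpace R]

lemma tsum_pi_prod {d : ℕ} (g : Fin d → ι → R) (hg : ∀ l, Summable fun k => ‖g l k‖) :
    ∑' ω : Fin d → ι, ∏ l, g l (ω l) = ∏ l, ∑' k, g l k := by
  induction d with
  | zero => simp
  | succ n ih =>
    have htail := summable_norm_pi_prod (fun l => g l.succ) fun l => hg l.succ
    rw [← (Fin.consEquiv fun _ => ι).tsum_eq, Fin.prod_univ_succ, ← ih _ fun l => hg l.succ,
      tsum_mul_tsum_of_summable_norm (hg 0) htail]
    simp only [Fin.consEquiv_apply, Fin.prod_univ_apply_cons]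

end PiProd

lemma mul_div_sqrt_div_sqrt_mul {p b : ℝ} (hp : 0 < p) (hb : 0 ≤ b) (u v : ℝ) :
    p * (u / √b / √p * (v / √b / √p)) = u * v / b := by
  rw [div_div, div_div, div_mul_div_comm, mul_mul_mul_comm, ← sq, ← sq, sq_sqrt hb, sq_sqrt hp.le,
    mul_div_assoc', mul_comm b p, mul_div_mul_left _ _ hp.ne']

lemma Real.tsum_pow_div_factorial (a : ℝ) : ∑' k : ℕ, a ^ k / k.factorial = exp a := by
  rw [exp_eq_exp_ℝ, NormedSpace.exp_eq_tsum_div]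

lemma neg_sum_sq_div_two_add_neg_sum_sq_div_two_add_sum_mul {ι : Type*} (s : Finset ι)
    (x y : ι → ℝ) :
    -(∑ l ∈ s, x l ^ 2) / 2 + -(∑ l ∈ s, y l ^ 2) / 2 + ∑ l ∈ s, x l * y l
      = -(∑ l ∈ s, (x l - y l) ^ 2) / 2 := by
  have h : ∑ l ∈ s, (x l - y l) ^ 2
      = ∑ l ∈ s, x l ^ 2 + ∑ l ∈ s, y l ^ 2 - 2 * ∑ l ∈ s, x l * y l := by
    simp only [sub_sq, Finset.sum_add_distrib, Finset.sum_sub_distrib, Finset.mul_sum, mul_assoc]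
    abel
  rw [h]
  ring

theorem stmt9_general (d : ℕ) (p : ℕ → ℝ) (hp : ∀ k, 0 < p k)
    (x y : Fin d → ℝ) :
    let f : (Fin d → ℕ) → (Fin d → ℝ) → ℝ := fun ω z =>
      Real.exp (-(∑ l, (z l) ^ 2) / 2) *
        ∏ l, z l ^ ω l / Real.sqrt ((ω l).factorial : ℝ) / Real.sqrt (p (ω l))
    ∑' ω : Fin d → ℕ, (∏ l, p (ω l)) * (f ω x * f ω y)
      = Real.exp (-(∑ l, (x l - y l) ^ 2) / 2) := by
  intro f
  set E := exp (-(∑ l, x l ^ 2) / 2) * exp (-(∑ l, y l ^ 2) / 2)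
  have hterm (ω : Fin d → ℕ) : (∏ l, p (ω l)) * (f ω x * f ω y)
      = E * ∏ l, (x l * y l) ^ ω l / (ω l).factorial :=
    calc (∏ l, p (ω l)) * (f ω x * f ω y)
        = E * ∏ l, p (ω l) * (x l ^ ω l / √((ω l).factorial : ℝ) / √(p (ω l)) *
            (y l ^ ω l / √((ω l).factorial : ℝ) / √(p (ω l)))) := by
          simp only [f, E, Finset.prod_mul_distrib]
          ring
      _ = E * ∏ l, (x l * y l) ^ ω l / (ω l).factorial := by
          simp only [mul_div_sqrt_div_sqrt_mul (hp _) (Nat.cast_nonneg _), mul_pow]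
  have hsummable (l : Fin d) : Summable fun k : ℕ => ‖(x l * y l) ^ k / k.factorial‖ :=
    summable_abs_iff.mpr (summable_pow_div_factorial _)
  calc ∑' ω : Fin d → ℕ, (∏ l, p (ω l)) * (f ω x * f ω y)
      = E * ∏ l, ∑' k : ℕ, (x l * y l) ^ k / k.factorial := by
        rw [tsum_congr hterm, tsum_mul_left, tsum_pi_prod _ hsummable]
    _ = E * exp (∑ l, x l * y l) := by simp only [tsum_pow_div_factorial, exp_sum]
    _ = exp (-(∑ l, (x l - y l) ^ 2) / 2) := by
        simp only [E, ← exp_add, neg_sum_sq_div_two_add_neg_sum_sq_div_two_add_sum_mul]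

/-- Discretely-induced random features are unbiased for the Gaussian kernel. -/
theorem stmt9 (d : ℕ) (p : ℕ → ℝ) (hp : ∀ k, 0 < p k) (hp1 : ∑' k, p k = 1)
    (x y : Fin d → ℝ)
    (hconv : ∀ l, Summable fun k : ℕ => |x l * y l| ^ k / ((k.factorial : ℝ) * p k)) :
    let f : (Fin d → ℕ) → (Fin d → ℝ) → ℝ := fun ω z =>
      Real.exp (-(∑ l, (z l) ^ 2) / 2) *
        ∏ l, z l ^ ω l / Real.sqrt ((ω l).factorial : ℝ) / Real.sqrt (p (ω l))
    ∑' ω : Fin d → ℕ, (∏ l, p (ω l)) * (f ω x * f ω y)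
      = Real.exp (-(∑ l, (x l - y l) ^ 2) / 2) :=
  stmt9_general d p hp x y
end

section
/- Let λ > 0, let ω = (ω_1,…,ω_d) with ω_l i.i.d. Poisson(λ), and define f_pois(ω, z) = exp(λd/2 - ‖z‖²/2) Π_{l=1}^d z_l^{ω_l} λ^{-ω_l/2}. Then Var(f_pois(ω,x) f_pois(ω,y)) = exp( λd + λ^{-1} Σ_{l=1}^d x_l² y_l² - ‖x‖² - ‖y‖² ) - exp(-‖x-y‖²). -/
open Real

lemma hasSum_exp_real (x : ℝ) :
    HasSum (fun n : ℕ => x ^ n / (n.factorial : ℝ)) (Real.exp x) := by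
  have h := (Real.summable_pow_div_factorial x).hasSum
  rw [Real.exp_eq_exp_ℝ, NormedSpace.exp_eq_tsum_div]
  exact h

lemma hasSum_pi_prod : ∀ (d : ℕ) (a : Fin d → ℝ),
    HasSum (fun ω : Fin d → ℕ => ∏ l, (a l) ^ (ω l) / (((ω l).factorial : ℝ)))
      (∏ l, Real.exp (a l)) := by
  intro d
  induction d with
  | zero =>
    intro a
    have : HasSum (fun ω : Fin 0 → ℕ => ∏ l, (a l) ^ (ω l) / (((ω l).factorial : ℝ)))
        ((fun ω : Fin 0 → ℕ => ∏ l, (a l) ^ (ω l) / (((ω l).factorial : ℝ))) default) :=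
      hasSum_single default (fun b hb => absurd (Subsingleton.elim b default) hb)
    simp only [Finset.univ_eq_empty, Finset.prod_empty] at this ⊢
    exact this
  | succ n ih =>
    intro a
    have h1 := hasSum_exp_real (a 0)
    have h2 := ih (fun l => a l.succ)
    have hn1 : Summable fun k : ℕ => ‖(a 0) ^ k / ((k.factorial : ℝ))‖ := by
      refine (Real.summable_pow_div_factorial |a 0|).congr fun k => ?_
      simp [Real.norm_eq_abs, abs_div, abs_pow, Nat.abs_cast]
    have hn2 : Summable fun ω : Fin n → ℕ =>
        ‖∏ l, (a l.succ) ^ (ω l) / (((ω l).factorial : ℝ))‖ := by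
      refine (ih (fun l => |a l.succ|)).summable.congr fun ω => ?_
      simp [Real.norm_eq_abs, Finset.abs_prod, abs_div, abs_pow, Nat.abs_cast]
    have hmul := summable_mul_of_summable_norm hn1 hn2
    have h3 := h1.mul h2 hmul
    refine ((Fin.consEquiv fun _ : Fin (n + 1) => ℕ).hasSum_iff).mp ?_
    have hfun : ((fun ω : Fin (n + 1) → ℕ => ∏ l, (a l) ^ (ω l) / (((ω l).factorial : ℝ)))
          ∘ (Fin.consEquiv fun _ : Fin (n + 1) => ℕ))
        = fun p : ℕ × (Fin n → ℕ) => (a 0 ^ p.1 / ((p.1.factorial : ℝ))) *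
            ∏ l, (a l.succ) ^ (p.2 l) / (((p.2 l).factorial : ℝ)) := by
      funext p
      simp [Fin.consEquiv, Function.comp, Fin.prod_univ_succ, mul_div_mul_comm]
    rw [Fin.prod_univ_succ, hfun]
    exact h3

/-- Variance of Poisson random features for the Gaussian kernel. -/
theorem stmt10 (d : ℕ) (lam : ℝ) (hlam : 0 < lam) (x y : Fin d → ℝ) :
    let pmf : ℕ → ℝ := fun k => Real.exp (-lam) * lam ^ k / (k.factorial : ℝ)
    let f : (Fin d → ℕ) → (Fin d → ℝ) → ℝ := fun ω z =>
      Real.exp (lam * d / 2 - (∑ l, (z l) ^ 2) / 2) *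
        ∏ l, z l ^ ω l / Real.sqrt lam ^ ω l
    (∑' ω : Fin d → ℕ, (∏ l, pmf (ω l)) * (f ω x * f ω y) ^ 2)
      - (∑' ω : Fin d → ℕ, (∏ l, pmf (ω l)) * (f ω x * f ω y)) ^ 2
    = Real.exp (lam * d + lam⁻¹ * ∑ l, (x l) ^ 2 * (y l) ^ 2
        - ∑ l, (x l) ^ 2 - ∑ l, (y l) ^ 2)
      - Real.exp (-(∑ l, (x l - y l) ^ 2)) := by
  intro pmf f
  have hsne : Real.sqrt lam ≠ 0 := ne_of_gt (Real.sqrt_pos.mpr hlam)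
  have hlamne : lam ≠ 0 := ne_of_gt hlam
  have hs2 : ∀ k : ℕ, Real.sqrt lam ^ k * Real.sqrt lam ^ k = lam ^ k := by
    intro k; rw [← mul_pow, Real.mul_self_sqrt hlam.le]
  set Sx := ∑ l, (x l) ^ 2 with hSx
  set Sy := ∑ l, (y l) ^ 2 with hSy
  -- first moment
  have key1 : ∀ ω : Fin d → ℕ,
      (∏ l, pmf (ω l)) * (f ω x * f ω y)
        = Real.exp (-(Sx / 2) - Sy / 2) *
            ∏ l, (x l * y l) ^ (ω l) / (((ω l).factorial : ℝ)) := by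
    intro ω
    simp only [pmf, f]
    have step : ∀ l : Fin d,
        Real.exp (-lam) * lam ^ (ω l) / ((ω l).factorial : ℝ) *
          (x l ^ (ω l) / Real.sqrt lam ^ (ω l) * (y l ^ (ω l) / Real.sqrt lam ^ (ω l)))
        = Real.exp (-lam) * ((x l * y l) ^ (ω l) / (((ω l).factorial : ℝ))) := by
      intro l
      have hk : ((ω l).factorial : ℝ) ≠ 0 := Nat.cast_ne_zero.mpr (ω l).factorial_ne_zero
      have hsk : Real.sqrt lam ^ (ω l) ≠ 0 := pow_ne_zero _ hsne
      field_simp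
      rw [mul_pow, ← hs2 (ω l)]
      ring
    have hcomb : (Real.exp (lam * d / 2 - Sx / 2) * Real.exp (lam * d / 2 - Sy / 2)) *
        ∏ l, (Real.exp (-lam) * lam ^ (ω l) / ((ω l).factorial : ℝ) *
          (x l ^ (ω l) / Real.sqrt lam ^ (ω l) * (y l ^ (ω l) / Real.sqrt lam ^ (ω l))))
        = Real.exp (-(Sx / 2) - Sy / 2) *
            ∏ l, (x l * y l) ^ (ω l) / (((ω l).factorial : ℝ)) := by
      have hcard : (Finset.univ : Finset (Fin d)).card = d := by simp
      rw [Finset.prod_congr rfl fun l _ => step l, Finset.prod_mul_distrib,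
        Finset.prod_const, hcard, ← Real.exp_nat_mul, ← mul_assoc, ← Real.exp_add,
        ← Real.exp_add]
      congr 2
      ring
    rw [← hcomb, Finset.prod_mul_distrib, Finset.prod_mul_distrib]
    ring
  have hA : HasSum (fun ω : Fin d → ℕ => (∏ l, pmf (ω l)) * (f ω x * f ω y))
      (Real.exp ((∑ l, x l * y l) - Sx / 2 - Sy / 2)) := by
    have h := (hasSum_pi_prod d (fun l => x l * y l)).mul_left
      (Real.exp (-(Sx / 2) - Sy / 2))
    have hv : Real.exp (-(Sx / 2) - Sy / 2) *
        ∏ l, Real.exp (x l * y l) = Real.exp ((∑ l, x l * y l) - Sx / 2 - Sy / 2) := by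
      rw [← Real.exp_sum, ← Real.exp_add]
      congr 1
      ring
    rw [hv] at h
    exact h.congr_fun fun ω => key1 ω
  -- second moment
  have key2 : ∀ ω : Fin d → ℕ,
      (∏ l, pmf (ω l)) * (f ω x * f ω y) ^ 2
        = Real.exp (lam * d - Sx - Sy) *
            ∏ l, ((x l) ^ 2 * (y l) ^ 2 * lam⁻¹) ^ (ω l) / (((ω l).factorial : ℝ)) := by
    intro ω
    simp only [pmf, f]
    have step : ∀ l : Fin d,
        Real.exp (-lam) * lam ^ (ω l) / ((ω l).factorial : ℝ) *
          ((x l ^ (ω l) / Real.sqrt lam ^ (ω l)) ^ 2 * (y l ^ (ω l) / Real.sqrt lam ^ (ω l)) ^ 2)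
        = Real.exp (-lam) *
            (((x l) ^ 2 * (y l) ^ 2 * lam⁻¹) ^ (ω l) / (((ω l).factorial : ℝ))) := by
      intro l
      have hk : ((ω l).factorial : ℝ) ≠ 0 := Nat.cast_ne_zero.mpr (ω l).factorial_ne_zero
      have hsk : Real.sqrt lam ^ (ω l) ≠ 0 := pow_ne_zero _ hsne
      have hlk : lam ^ (ω l) ≠ 0 := pow_ne_zero _ hlamne
      field_simp
      have hzl : (x l ^ 2 * y l ^ 2 / lam) ^ (ω l) * lam ^ (ω l) = (x l ^ 2 * y l ^ 2) ^ (ω l) := by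
        rw [← mul_pow, div_mul_cancel₀ _ hlamne]
      rw [show (Real.sqrt lam ^ (ω l)) ^ 4 * (x l ^ 2 * y l ^ 2 / lam) ^ (ω l)
          = lam ^ (ω l) * (x l ^ 2 * y l ^ 2) ^ (ω l) from by
        rw [show (Real.sqrt lam ^ (ω l)) ^ 4 = lam ^ (ω l) * lam ^ (ω l) from by rw [← hs2]; ring]
        linear_combination lam ^ (ω l) * hzl]
      ring
    have hcomb : (Real.exp (lam * d / 2 - Sx / 2) ^ 2 * Real.exp (lam * d / 2 - Sy / 2) ^ 2) *
        ∏ l, (Real.exp (-lam) * lam ^ (ω l) / ((ω l).factorial : ℝ) *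
          ((x l ^ (ω l) / Real.sqrt lam ^ (ω l)) ^ 2 * (y l ^ (ω l) / Real.sqrt lam ^ (ω l)) ^ 2))
        = Real.exp (lam * d - Sx - Sy) *
            ∏ l, ((x l) ^ 2 * (y l) ^ 2 * lam⁻¹) ^ (ω l) / (((ω l).factorial : ℝ)) := by
      have hcard : (Finset.univ : Finset (Fin d)).card = d := by simp
      rw [Finset.prod_congr rfl fun l _ => step l, Finset.prod_mul_distrib,
        Finset.prod_const, hcard, ← Real.exp_nat_mul, ← Real.exp_nat_mul,
        ← Real.exp_nat_mul, ← mul_assoc, ← Real.exp_add, ← Real.exp_add]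
      congr 2
      push_cast
      ring
    rw [← hcomb, Finset.prod_mul_distrib, Finset.prod_mul_distrib,
      Finset.prod_pow, Finset.prod_pow]
    ring
  have hB : HasSum (fun ω : Fin d → ℕ => (∏ l, pmf (ω l)) * (f ω x * f ω y) ^ 2)
      (Real.exp (lam * d + lam⁻¹ * (∑ l, (x l) ^ 2 * (y l) ^ 2) - Sx - Sy)) := by
    have h := (hasSum_pi_prod d (fun l => (x l) ^ 2 * (y l) ^ 2 * lam⁻¹)).mul_left
      (Real.exp (lam * d - Sx - Sy))
    have hv : Real.exp (lam * d - Sx - Sy) *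
        ∏ l, Real.exp ((x l) ^ 2 * (y l) ^ 2 * lam⁻¹)
        = Real.exp (lam * d + lam⁻¹ * (∑ l, (x l) ^ 2 * (y l) ^ 2) - Sx - Sy) := by
      rw [← Real.exp_sum, ← Real.exp_add, ← Finset.sum_mul]
      congr 1
      ring
    rw [hv] at h
    exact h.congr_fun fun ω => key2 ω
  rw [hA.tsum_eq, hB.tsum_eq, ← Real.exp_nat_mul]
  have hsum : ∑ l, (x l - y l) ^ 2 = Sx + Sy - 2 * ∑ l, x l * y l := by
    rw [hSx, hSy, Finset.mul_sum, ← Finset.sum_add_distrib, ← Finset.sum_sub_distrib]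
    exact Finset.sum_congr rfl fun l _ => by ring
  rw [hsum]
  congr 2
  push_cast
  ring
end

section
/- Let 0 < p < 1, ω = (ω_1,…,ω_d) with ω_l i.i.d. geometric, ℙ(ω_l = k) = p(1-p)^k for k ≥ 0, and f_geom(ω, z) = p^{-d/2} exp(-‖z‖²/2) Π_{l=1}^d z_l^{ω_l} (1-p)^{-ω_l/2} (ω_l!)^{-1/2}. Then Var(f_geom(ω,x) f_geom(ω,y)) = p^{-d} exp(-‖x‖² - ‖y‖²) Π_{l=1}^d I₀( 2(1-p)^{-1/2} |x_l y_l| ) - exp(-‖x-y‖²), where I₀(t) = Σ_{k=0}^∞ (t/2)^{2k} / (k!)². -/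
open Real

set_option maxHeartbeats 1000000

lemma geomRF_summable_abs_prod {d : ℕ} (g : Fin d → ℕ → ℝ)
    (hg : ∀ l, Summable fun k => |g l k|) :
    Summable fun ω : Fin d → ℕ => ∏ l, |g l (ω l)| := by
  induction d with
  | zero =>
    haveI : Finite (Fin 0 → ℕ) := Finite.of_subsingleton
    exact Summable.of_finite
  | succ n ih =>
    have key : Summable fun q : ℕ × (Fin n → ℕ) => |g 0 q.1| * ∏ l, |g (Fin.succ l) (q.2 l)| :=
      Summable.mul_of_nonneg (f := fun k : ℕ => |g 0 k|)
        (g := fun ω : Fin n → ℕ => ∏ l, |g (Fin.succ l) (ω l)|)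
        (hg 0) (ih (fun l => g (Fin.succ l)) (fun l => hg _))
        (fun k => abs_nonneg _)
        (fun ω => Finset.prod_nonneg fun l _ => abs_nonneg _)
    refine (Fin.consEquiv fun _ : Fin (n + 1) => ℕ).summable_iff.mp (key.congr fun q => ?_)
    simp [Function.comp, Fin.consEquiv, Fin.prod_univ_succ]

lemma geomRF_tsum_prod {d : ℕ} (g : Fin d → ℕ → ℝ)
    (hg : ∀ l, Summable fun k => |g l k|) :
    ∑' ω : Fin d → ℕ, ∏ l, g l (ω l) = ∏ l, ∑' k, g l k := by
  induction d with
  | zero =>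
    simp only [Finset.univ_eq_empty, Finset.prod_empty]
    exact tsum_eq_single default fun b hb => (hb (Subsingleton.elim b default)).elim
  | succ n ih =>
    rw [← (Fin.consEquiv fun _ : Fin (n + 1) => ℕ).tsum_eq]
    have h1 : Summable fun k : ℕ => ‖g 0 k‖ := by simpa using hg 0
    have h2 : Summable fun ω : Fin n → ℕ => ‖∏ l, g (Fin.succ l) (ω l)‖ := by
      simpa [Real.norm_eq_abs, Finset.abs_prod] using
        geomRF_summable_abs_prod (fun l => g (Fin.succ l)) (fun l => hg _)
    calc ∑' q : ℕ × (Fin n → ℕ), ∏ l, g l ((Fin.consEquiv fun _ : Fin (n + 1) => ℕ) q l)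
        = ∑' q : ℕ × (Fin n → ℕ), g 0 q.1 * ∏ l, g (Fin.succ l) (q.2 l) := by
          refine tsum_congr fun q => ?_
          simp [Fin.consEquiv, Fin.prod_univ_succ]
      _ = (∑' k, g 0 k) * ∑' ω : Fin n → ℕ, ∏ l, g (Fin.succ l) (ω l) :=
          (tsum_mul_tsum_of_summable_norm (f := fun k : ℕ => g 0 k)
            (g := fun ω : Fin n → ℕ => ∏ l, g (Fin.succ l) (ω l)) h1 h2).symm
      _ = ∏ l, ∑' k, g l k := by
          rw [ih (fun l => g (Fin.succ l)) (fun l => hg _), Fin.prod_univ_succ]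

/-- Variance of geometric random features for the Gaussian kernel,
where `I₀` is the modified Bessel function of the first kind of order 0. -/
theorem stmt12 (d : ℕ) (p : ℝ) (hp0 : 0 < p) (hp1 : p < 1) (x y : Fin d → ℝ) :
    let pmf : ℕ → ℝ := fun k => p * (1 - p) ^ k
    let f : (Fin d → ℕ) → (Fin d → ℝ) → ℝ := fun ω z =>
      p ^ (-(d : ℝ) / 2) * Real.exp (-(∑ l, (z l) ^ 2) / 2) *
        ∏ l, z l ^ ω l / Real.sqrt (1 - p) ^ ω l / Real.sqrt ((ω l).factorial : ℝ)
    let I₀ : ℝ → ℝ := fun t => ∑' k : ℕ, (t / 2) ^ (2 * k) / ((k.factorial : ℝ)) ^ 2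
    (∑' ω : Fin d → ℕ, (∏ l, pmf (ω l)) * (f ω x * f ω y) ^ 2)
      - (∑' ω : Fin d → ℕ, (∏ l, pmf (ω l)) * (f ω x * f ω y)) ^ 2
    = p ^ (-(d : ℝ)) * Real.exp (-∑ l, (x l) ^ 2 - ∑ l, (y l) ^ 2) *
        (∏ l, I₀ (2 * (1 - p) ^ (-(1 : ℝ) / 2) * |x l * y l|))
      - Real.exp (-(∑ l, (x l - y l) ^ 2)) := by
  intro pmf f I₀
  have h1p : (0 : ℝ) < 1 - p := by linarith
  have h1pk : ∀ k : ℕ, (1 - p) ^ k ≠ 0 := fun k => pow_ne_zero _ (ne_of_gt h1p)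
  have hfk : ∀ k : ℕ, ((k.factorial : ℝ)) ≠ 0 := fun k => by positivity
  -- per-factor product of features
  have hfac : ∀ (a b : ℝ) (k : ℕ),
      a ^ k / Real.sqrt (1 - p) ^ k / Real.sqrt (k.factorial : ℝ) *
        (b ^ k / Real.sqrt (1 - p) ^ k / Real.sqrt (k.factorial : ℝ))
      = (a * b) ^ k / ((1 - p) ^ k * (k.factorial : ℝ)) := by
    intro a b k
    have hs : Real.sqrt (1 - p) ^ k * Real.sqrt (1 - p) ^ k = (1 - p) ^ k := by
      rw [← mul_pow, Real.mul_self_sqrt h1p.le]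
    have ht : Real.sqrt (k.factorial : ℝ) * Real.sqrt (k.factorial : ℝ) = (k.factorial : ℝ) :=
      Real.mul_self_sqrt (Nat.cast_nonneg _)
    rw [div_div, div_div, div_mul_div_comm, ← mul_pow, mul_mul_mul_comm, hs, ht]
  have key1 : ∀ (l : Fin d) (k : ℕ),
      p * (1 - p) ^ k *
        (x l ^ k / Real.sqrt (1 - p) ^ k / Real.sqrt (k.factorial : ℝ) *
          (y l ^ k / Real.sqrt (1 - p) ^ k / Real.sqrt (k.factorial : ℝ)))
      = p * (x l * y l) ^ k / (k.factorial : ℝ) := by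
    intro l k
    rw [hfac]
    have h1 := h1pk k
    have h2 := hfk k
    field_simp
  have key2 : ∀ (l : Fin d) (k : ℕ),
      p * (1 - p) ^ k *
        (x l ^ k / Real.sqrt (1 - p) ^ k / Real.sqrt (k.factorial : ℝ) *
          (y l ^ k / Real.sqrt (1 - p) ^ k / Real.sqrt (k.factorial : ℝ)) *
         (x l ^ k / Real.sqrt (1 - p) ^ k / Real.sqrt (k.factorial : ℝ) *
          (y l ^ k / Real.sqrt (1 - p) ^ k / Real.sqrt (k.factorial : ℝ))))
      = p * ((x l * y l) ^ 2 / (1 - p)) ^ k / ((k.factorial : ℝ)) ^ 2 := by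
    intro l k
    rw [hfac, div_pow, ← pow_mul, mul_comm 2 k, pow_mul]
    have h1 := h1pk k
    have h2 := hfk k
    field_simp
  set C : ℝ := p ^ (-(d : ℝ) / 2) * Real.exp (-(∑ l, (x l) ^ 2) / 2) *
      (p ^ (-(d : ℝ) / 2) * Real.exp (-(∑ l, (y l) ^ 2) / 2)) with hC
  -- summand rewrites
  have hsum1 : ∀ ω : Fin d → ℕ, (∏ l, pmf (ω l)) * (f ω x * f ω y)
      = C * ∏ l, (p * (x l * y l) ^ (ω l) / ((ω l).factorial : ℝ)) := by
    intro ω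
    simp only [pmf, f, hC]
    have hprod : (∏ l, (p * (1 - p) ^ (ω l))) *
        ((∏ l, x l ^ (ω l) / Real.sqrt (1 - p) ^ (ω l) / Real.sqrt ((ω l).factorial : ℝ)) *
         (∏ l, y l ^ (ω l) / Real.sqrt (1 - p) ^ (ω l) / Real.sqrt ((ω l).factorial : ℝ)))
        = ∏ l, (p * (x l * y l) ^ (ω l) / ((ω l).factorial : ℝ)) := by
      rw [← Finset.prod_mul_distrib, ← Finset.prod_mul_distrib]
      exact Finset.prod_congr rfl fun l _ => key1 l (ω l)
    rw [← hprod]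
    ring
  have hsum2 : ∀ ω : Fin d → ℕ, (∏ l, pmf (ω l)) * (f ω x * f ω y) ^ 2
      = C ^ 2 * ∏ l, (p * ((x l * y l) ^ 2 / (1 - p)) ^ (ω l) / (((ω l).factorial : ℝ)) ^ 2) := by
    intro ω
    simp only [pmf, f, hC]
    have hprod : (∏ l, (p * (1 - p) ^ (ω l))) *
        (((∏ l, x l ^ (ω l) / Real.sqrt (1 - p) ^ (ω l) / Real.sqrt ((ω l).factorial : ℝ)) *
          (∏ l, y l ^ (ω l) / Real.sqrt (1 - p) ^ (ω l) / Real.sqrt ((ω l).factorial : ℝ))) *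
         ((∏ l, x l ^ (ω l) / Real.sqrt (1 - p) ^ (ω l) / Real.sqrt ((ω l).factorial : ℝ)) *
          (∏ l, y l ^ (ω l) / Real.sqrt (1 - p) ^ (ω l) / Real.sqrt ((ω l).factorial : ℝ))))
        = ∏ l, (p * ((x l * y l) ^ 2 / (1 - p)) ^ (ω l) / (((ω l).factorial : ℝ)) ^ 2) := by
      rw [← Finset.prod_mul_distrib, ← Finset.prod_mul_distrib, ← Finset.prod_mul_distrib]
      exact Finset.prod_congr rfl fun l _ => key2 l (ω l)
    rw [← hprod]
    ring
  -- summability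
  have habs1 : ∀ l : Fin d, Summable fun k : ℕ => |p * (x l * y l) ^ k / (k.factorial : ℝ)| := by
    intro l
    refine ((Real.summable_pow_div_factorial |x l * y l|).mul_left p).congr fun k => ?_
    simp only [abs_div, abs_mul, abs_pow, abs_of_pos hp0, Nat.abs_cast, mul_div_assoc]
  have habs2 : ∀ l : Fin d,
      Summable fun k : ℕ => |p * ((x l * y l) ^ 2 / (1 - p)) ^ k / ((k.factorial : ℝ)) ^ 2| := by
    intro l
    have hc : 0 ≤ (x l * y l) ^ 2 / (1 - p) := div_nonneg (sq_nonneg _) h1p.le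
    refine Summable.of_nonneg_of_le (fun k => abs_nonneg _) (fun k => ?_)
      (((Real.summable_pow_div_factorial ((x l * y l) ^ 2 / (1 - p))).mul_left p))
    have h0 : (0:ℝ) < (k.factorial : ℝ) := by positivity
    have h1 : ((k.factorial : ℝ)) ≤ ((k.factorial : ℝ)) ^ 2 :=
      le_self_pow₀ (by exact_mod_cast k.factorial_pos) two_ne_zero
    rw [abs_of_nonneg (by positivity), mul_div_assoc]
    gcongr
  -- per-coordinate sums
  have ht1 : ∀ l : Fin d, (∑' k : ℕ, p * (x l * y l) ^ k / (k.factorial : ℝ))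
      = p * Real.exp (x l * y l) := by
    intro l
    rw [Real.exp_eq_exp_ℝ, NormedSpace.exp_eq_tsum_div, ← tsum_mul_left]
    exact tsum_congr fun k => (mul_div_assoc _ _ _)
  have ht2 : ∀ l : Fin d, (∑' k : ℕ, p * ((x l * y l) ^ 2 / (1 - p)) ^ k / ((k.factorial : ℝ)) ^ 2)
      = p * I₀ (2 * (1 - p) ^ (-(1 : ℝ) / 2) * |x l * y l|) := by
    intro l
    simp only [I₀]
    rw [← tsum_mul_left]
    refine tsum_congr fun k => ?_
    have hpow : ((1 - p) ^ (-(1 : ℝ) / 2) * |x l * y l|) ^ (2 * k)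
        = ((1 - p) ^ k)⁻¹ * ((x l * y l) ^ 2) ^ k := by
      rw [mul_pow, ← Real.rpow_natCast ((1 - p) ^ (-(1 : ℝ) / 2)) (2 * k),
          ← Real.rpow_mul h1p.le,
          show (-(1 : ℝ) / 2) * ((2 * k : ℕ) : ℝ) = -(k : ℝ) by push_cast; ring,
          Real.rpow_neg h1p.le, Real.rpow_natCast, pow_mul, sq_abs]
    rw [show 2 * (1 - p) ^ (-(1 : ℝ) / 2) * |x l * y l| / 2
          = (1 - p) ^ (-(1 : ℝ) / 2) * |x l * y l| by ring, hpow]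
    have h1 := h1pk k
    have h2 := hfk k
    field_simp
    rw [div_pow, div_mul_cancel₀ _ h1]
  -- factor the two tsums
  have e1 : (∑' ω : Fin d → ℕ, (∏ l, pmf (ω l)) * (f ω x * f ω y))
      = C * ∏ l, (p * Real.exp (x l * y l)) := by
    calc (∑' ω : Fin d → ℕ, (∏ l, pmf (ω l)) * (f ω x * f ω y))
        = ∑' ω : Fin d → ℕ, C * ∏ l, (p * (x l * y l) ^ (ω l) / ((ω l).factorial : ℝ)) :=
          tsum_congr hsum1
      _ = C * ∑' ω : Fin d → ℕ, ∏ l, (p * (x l * y l) ^ (ω l) / ((ω l).factorial : ℝ)) :=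
          tsum_mul_left
      _ = C * ∏ l, ∑' k : ℕ, (p * (x l * y l) ^ k / (k.factorial : ℝ)) :=
          congrArg (C * ·) (geomRF_tsum_prod
            (fun l k => p * (x l * y l) ^ k / (k.factorial : ℝ)) habs1)
      _ = C * ∏ l, (p * Real.exp (x l * y l)) := by
          rw [Finset.prod_congr rfl fun l _ => ht1 l]
  have e2 : (∑' ω : Fin d → ℕ, (∏ l, pmf (ω l)) * (f ω x * f ω y) ^ 2)
      = C ^ 2 * ∏ l, (p * I₀ (2 * (1 - p) ^ (-(1 : ℝ) / 2) * |x l * y l|)) := by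
    calc (∑' ω : Fin d → ℕ, (∏ l, pmf (ω l)) * (f ω x * f ω y) ^ 2)
        = ∑' ω : Fin d → ℕ, C ^ 2 *
            ∏ l, (p * ((x l * y l) ^ 2 / (1 - p)) ^ (ω l) / (((ω l).factorial : ℝ)) ^ 2) :=
          tsum_congr hsum2
      _ = C ^ 2 * ∑' ω : Fin d → ℕ,
            ∏ l, (p * ((x l * y l) ^ 2 / (1 - p)) ^ (ω l) / (((ω l).factorial : ℝ)) ^ 2) :=
          tsum_mul_left
      _ = C ^ 2 * ∏ l, ∑' k : ℕ, (p * ((x l * y l) ^ 2 / (1 - p)) ^ k / ((k.factorial : ℝ)) ^ 2) :=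
          congrArg (C ^ 2 * ·) (geomRF_tsum_prod
            (fun l k => p * ((x l * y l) ^ 2 / (1 - p)) ^ k / ((k.factorial : ℝ)) ^ 2) habs2)
      _ = C ^ 2 * ∏ l, (p * I₀ (2 * (1 - p) ^ (-(1 : ℝ) / 2) * |x l * y l|)) := by
          rw [Finset.prod_congr rfl fun l _ => ht2 l]
  rw [e1, e2, Finset.prod_mul_distrib, Finset.prod_mul_distrib, Finset.prod_const,
      Finset.card_univ, Fintype.card_fin, ← Real.exp_sum]
  have hsub : (∑ l, (x l - y l) ^ 2)
      = ∑ l, (x l) ^ 2 + ∑ l, (y l) ^ 2 - 2 * ∑ l, (x l * y l) := by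
    rw [Finset.mul_sum, ← Finset.sum_add_distrib, ← Finset.sum_sub_distrib]
    exact Finset.sum_congr rfl fun l _ => by ring
  have hA : C ^ 2 * (p : ℝ) ^ d
      = p ^ (-(d : ℝ)) * Real.exp (-∑ l, (x l) ^ 2 - ∑ l, (y l) ^ 2) := by
    rw [hC, ← Real.rpow_natCast p d,
        show (p ^ (-(d : ℝ) / 2) * Real.exp (-(∑ l, (x l) ^ 2) / 2) *
            (p ^ (-(d : ℝ) / 2) * Real.exp (-(∑ l, (y l) ^ 2) / 2))) ^ 2 * p ^ ((d : ℕ) : ℝ)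
          = p ^ (-(d : ℝ) / 2) * p ^ (-(d : ℝ) / 2) * (p ^ (-(d : ℝ) / 2) * p ^ (-(d : ℝ) / 2)) *
              p ^ ((d : ℕ) : ℝ) *
            (Real.exp (-(∑ l, (x l) ^ 2) / 2) * Real.exp (-(∑ l, (x l) ^ 2) / 2) *
              (Real.exp (-(∑ l, (y l) ^ 2) / 2) * Real.exp (-(∑ l, (y l) ^ 2) / 2))) from by ring]
    simp only [← Real.rpow_add hp0, ← Real.exp_add]
    congr 1
    · congr 1
      push_cast
      ring
    · congr 1
      ring
  have hB : (C * ((p : ℝ) ^ d * Real.exp (∑ l, x l * y l))) ^ 2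
      = Real.exp (-(∑ l, (x l - y l) ^ 2)) := by
    rw [hC, ← Real.rpow_natCast p d,
        show (p ^ (-(d : ℝ) / 2) * Real.exp (-(∑ l, (x l) ^ 2) / 2) *
              (p ^ (-(d : ℝ) / 2) * Real.exp (-(∑ l, (y l) ^ 2) / 2)) *
            (p ^ ((d : ℕ) : ℝ) * Real.exp (∑ l, x l * y l))) ^ 2
          = p ^ (-(d : ℝ) / 2) * p ^ (-(d : ℝ) / 2) * (p ^ (-(d : ℝ) / 2) * p ^ (-(d : ℝ) / 2)) *
              (p ^ ((d : ℕ) : ℝ) * p ^ ((d : ℕ) : ℝ)) *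
            (Real.exp (-(∑ l, (x l) ^ 2) / 2) * Real.exp (-(∑ l, (x l) ^ 2) / 2) *
              (Real.exp (-(∑ l, (y l) ^ 2) / 2) * Real.exp (-(∑ l, (y l) ^ 2) / 2)) *
              (Real.exp (∑ l, x l * y l) * Real.exp (∑ l, x l * y l))) from by ring]
    simp only [← Real.rpow_add hp0, ← Real.exp_add]
    rw [show -(d : ℝ) / 2 + -(d : ℝ) / 2 + (-(d : ℝ) / 2 + -(d : ℝ) / 2) +
          (((d : ℕ) : ℝ) + ((d : ℕ) : ℝ)) = (0 : ℝ) by push_cast; ring,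
        Real.rpow_zero, one_mul]
    congr 1
    rw [hsub]
    ring
  linear_combination (∏ l, I₀ (2 * (1 - p) ^ (-(1 : ℝ) / 2) * |x l * y l|)) * hA - hB
end
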